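/- Let C be a real symmetric positive definite n×n matrix with unit diagonal and b ∈ ℝⁿ, and let 1 ≤ k ≤ n. Then max over subsets S ⊆ {1,…,n} of size k−1 of R²(S) is at least (1 − 1/(k · λmin(C,k))) times the max over subsets S of size k of R²(S). -/

import Mathlib

open scoped Matrix

/-- The smallest eigenvalue of a real symmetric (Hermitian) matrix. -/
noncomputable def lambdaMin {m : Type*} [Fintype m] [DecidableEq m] (A : Matrix m m ℝ) : ℝ :=
  if hA : A.IsHermitian then ⨅ i, hA.eigenvalues i else 0

/-- The largest eigenvalue of a real symmetric (Hermitian) matrix. -/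
noncomputable def lambdaMax {m : Type*} [Fintype m] [DecidableEq m] (A : Matrix m m ℝ) : ℝ :=
  if hA : A.IsHermitian then ⨆ i, hA.eigenvalues i else 0

/-- The principal submatrix of `C` on rows and columns in `S`. -/
def subMat {ι : Type*} (C : Matrix ι ι ℝ) (S : Finset ι) : Matrix S S ℝ :=
  fun i j => C i j

/-- `R²(S) = b_Sᵀ (C_S)⁻¹ b_S`, the squared multiple correlation. -/
noncomputable def R2 {ι : Type*} [Fintype ι] [DecidableEq ι]
    (C : Matrix ι ι ℝ) (b : ι → ℝ) (S : Finset ι) : ℝ :=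
  (fun i : S => b i) ⬝ᵥ (subMat C S)⁻¹ *ᵥ (fun i : S => b i)

/-- `λmin(C,k)`: the smallest eigenvalue of any `k × k` principal submatrix of `C`. -/
noncomputable def lambdaMinK {n : ℕ} (C : Matrix (Fin n) (Fin n) ℝ) (k : ℕ) : ℝ :=
  sInf {x | ∃ S : Finset (Fin n), S.card = k ∧ x = lambdaMin (subMat C S)}

/-- `λmax(C,k)`: the largest eigenvalue of any `k × k` principal submatrix of `C`. -/
noncomputable def lambdaMaxK {n : ℕ} (C : Matrix (Fin n) (Fin n) ℝ) (k : ℕ) : ℝ :=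
  sSup {x | ∃ S : Finset (Fin n), S.card = k ∧ x = lambdaMax (subMat C S)}

/-- `Cov(Res(Z|S), X_m) = b_m - C_{m,S} (C_S)⁻¹ b_S`. -/
noncomputable def resCov {ι : Type*} [Fintype ι] [DecidableEq ι]
    (C : Matrix ι ι ℝ) (b : ι → ℝ) (S : Finset ι) (m : ι) : ℝ :=
  b m - (fun i : S => C m i) ⬝ᵥ ((subMat C S)⁻¹ *ᵥ (fun i : S => b i))

/-! Take a size-`k` set `S` maximising `R²`, and let `α = C_S⁻¹ b_S`, so that
`R²(S) = αᵀ C_S α ≥ λmin(C_S) ‖α‖²`. Since `R²(T)` is the maximum of `2 wᵀ b_T - wᵀ C_T w`,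
zeroing out one coordinate `j` of `α` gives `R²(S ∖ {j}) ≥ R²(S) - C_jj α_j²`. With unit
diagonal and `j` minimising `α_j²` we have `α_j² ≤ ‖α‖² / k ≤ R²(S) / (k λmin(C,k))`. -/

open Matrix

section Restrict

variable {ι : Type*} [Fintype ι] {S : Finset ι}

theorem dotProduct_eq_of_support_subset {R : Type*} [NonUnitalNonAssocSemiring R]
    {v w : ι → R} (hv : ∀ i ∉ S, v i = 0) :
    v ⬝ᵥ w = (fun i : S => v i) ⬝ᵥ (fun i : S => w i) := by
  rw [dotProduct, ← Finset.sum_subset S.subset_univ fun i _ hi => by rw [hv i hi, zero_mul]]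
  exact (Finset.sum_coe_sort S fun i => v i * w i).symm

theorem mulVec_restrict_of_support_subset (C : Matrix ι ι ℝ) {v : ι → ℝ}
    (hv : ∀ i ∉ S, v i = 0) :
    (fun i : S => (C *ᵥ v) i) = subMat C S *ᵥ fun i : S => v i := by
  funext i
  rw [mulVec, dotProduct_comm, dotProduct_eq_of_support_subset hv, dotProduct_comm]
  rfl

theorem dotProduct_mulVec_eq_of_support_subset (C : Matrix ι ι ℝ) {v : ι → ℝ} (hv : ∀ i ∉ S, v i = 0) :
    v ⬝ᵥ C *ᵥ v = (fun i : S => v i) ⬝ᵥ subMat C S *ᵥ fun i : S => v i := by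
  rw [dotProduct_eq_of_support_subset hv, mulVec_restrict_of_support_subset C hv]

end Restrict

theorem Matrix.PosDef.mulVec_inv_mulVec {m : Type*} [Fintype m] [DecidableEq m]
    {A : Matrix m m ℝ} (hA : A.PosDef) (β : m → ℝ) : A *ᵥ (A⁻¹ *ᵥ β) = β := by
  rw [mulVec_mulVec, mul_nonsing_inv A (isUnit_iff_ne_zero.mpr hA.det_pos.ne'), one_mulVec]

theorem two_mul_dotProduct_sub_le_dotProduct_inv_mulVec {m : Type*} [Fintype m] [DecidableEq m]
    {A : Matrix m m ℝ} (hA : A.PosDef) (β w : m → ℝ) :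
    2 * (w ⬝ᵥ β) - w ⬝ᵥ A *ᵥ w ≤ β ⬝ᵥ A⁻¹ *ᵥ β := by
  set α := A⁻¹ *ᵥ β
  have hAα : A *ᵥ α = β := hA.mulVec_inv_mulVec β
  have hsymm : α ⬝ᵥ A *ᵥ w = w ⬝ᵥ β := by
    have hAt : Aᵀ = A := hA.1
    rw [dotProduct_mulVec, ← mulVec_transpose, hAt, dotProduct_comm, hAα]
  -- completing the square: `0 ≤ (α - w)ᵀ A (α - w)`
  have hsq := hA.posSemidef.dotProduct_mulVec_nonneg (α - w)
  simp only [mulVec_sub, hAα, sub_dotProduct, dotProduct_sub, hsymm, star_trivial] at hsq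
  rw [dotProduct_comm β]
  linarith

theorem subMat_posDef {ι : Type*} {C : Matrix ι ι ℝ} (hC : C.PosDef) (S : Finset ι) :
    (subMat C S).PosDef :=
  hC.submatrix Subtype.val_injective

section R2

variable {ι : Type*} [Fintype ι] [DecidableEq ι] {C : Matrix ι ι ℝ} (b : ι → ℝ)

theorem R2_nonneg (hC : C.PosDef) (S : Finset ι) : 0 ≤ R2 C b S :=
  (subMat_posDef hC S).inv.posSemidef.dotProduct_mulVec_nonneg _

theorem two_mul_dotProduct_sub_le_R2 (hC : C.PosDef) {S : Finset ι} {v : ι → ℝ}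
    (hv : ∀ i ∉ S, v i = 0) : 2 * (v ⬝ᵥ b) - v ⬝ᵥ C *ᵥ v ≤ R2 C b S := by
  rw [dotProduct_eq_of_support_subset hv, dotProduct_mulVec_eq_of_support_subset C hv]
  exact two_mul_dotProduct_sub_le_dotProduct_inv_mulVec (subMat_posDef hC S) _ _

theorem R2_sub_le_R2_erase (hC : C.PosDef) {S : Finset ι} {j : ι} (hj : j ∈ S) :
    R2 C b S - C j j * ((subMat C S)⁻¹ *ᵥ fun i : S => b i) ⟨j, hj⟩ ^ 2 ≤
      R2 C b (S.erase j) := by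
  set α := (subMat C S)⁻¹ *ᵥ fun i : S => b i
  set v : ι → ℝ := fun i => if h : i ∈ S then α ⟨i, h⟩ else 0
  have hv : ∀ i ∉ S, v i = 0 := fun i hi => dif_neg hi
  have hvS : (fun i : S => v i) = α := funext fun i => dif_pos i.2
  have hCv : ∀ i ∈ S, (C *ᵥ v) i = b i := fun i hi => by
    have := congrFun (mulVec_restrict_of_support_subset C hv) ⟨i, hi⟩
    rwa [hvS, (subMat_posDef hC S).mulVec_inv_mulVec] at this
  have hR2 : R2 C b S = v ⬝ᵥ b := by
    rw [R2, dotProduct_comm, dotProduct_eq_of_support_subset hv, hvS]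
  have hvCv : v ⬝ᵥ C *ᵥ v = v ⬝ᵥ b := by
    rw [dotProduct_eq_of_support_subset hv, dotProduct_eq_of_support_subset (w := b) hv]
    exact congrArg _ (funext fun i => hCv i i.2)
  have hCvj : v ⬝ᵥ C.col j = b j := by
    have hCt : Cᵀ = C := hC.1
    rw [← mulVec_single_one, dotProduct_mulVec, ← mulVec_transpose, hCt, dotProduct_comm,
      single_one_dotProduct, hCv j hj]
  set t := α ⟨j, hj⟩
  have hsupp : ∀ i ∉ S.erase j, (v - t • Pi.single j 1 : ι → ℝ) i = 0 := by
    intro i hi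
    by_cases hij : i = j
    · subst hij
      simp [v, hj, t]
    · simp [hv i (fun h => hi (Finset.mem_erase.mpr ⟨hij, h⟩)), hij]
  have := two_mul_dotProduct_sub_le_R2 b hC hsupp
  simp only [mulVec_sub, mulVec_smul, sub_dotProduct, dotProduct_sub, smul_dotProduct,
    dotProduct_smul, single_one_dotProduct, hCv j hj, mulVec_single_one, hCvj, smul_eq_mul,
    col_apply] at this
  rw [hR2]
  linarith

end R2

section Eigen

variable {m : Type*} [Fintype m] [DecidableEq m] {A : Matrix m m ℝ}

theorem lambdaMin_mul_dotProduct_self_le (hA : A.IsHermitian) (x : m → ℝ) :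
    lambdaMin A * (x ⬝ᵥ x) ≤ x ⬝ᵥ A *ᵥ x := by
  have hle : ∀ i, lambdaMin A ≤ hA.eigenvalues i := fun i => by
    rw [lambdaMin, dif_pos hA]
    exact ciInf_le (Set.finite_range _).bddBelow i
  have hpsd : (A - algebraMap ℝ (Matrix m m ℝ) (lambdaMin A)).PosSemidef := by
    rw [posSemidef_iff_isHermitian_and_spectrum_nonneg]
    refine ⟨hA.sub (isHermitian_diagonal _), ?_⟩
    rw [← spectrum.sub_singleton_eq, hA.spectrum_real_eq_range_eigenvalues]
    rintro _ ⟨_, ⟨i, rfl⟩, _, rfl, rfl⟩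
    simpa using hle i
  simpa [Algebra.algebraMap_eq_smul_one, sub_mulVec, smul_mulVec, dotProduct_sub] using
    hpsd.dotProduct_mulVec_nonneg x

theorem lambdaMin_pos [Nonempty m] (hA : A.PosDef) : 0 < lambdaMin A := by
  rw [lambdaMin, dif_pos hA.1]
  obtain ⟨i, hi⟩ := (Set.range_nonempty hA.1.eigenvalues).csInf_mem (Set.finite_range _)
  rw [iInf, ← hi]
  exact hA.eigenvalues_pos i

end Eigen

theorem exists_mem_one_sub_mul_R2_le_R2_erase {ι : Type*} [Fintype ι] [DecidableEq ι]
    {C : Matrix ι ι ℝ} (b : ι → ℝ) (hC : C.PosDef) (hdiag : ∀ i, C i i = 1) {S : Finset ι}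
    (hS : S.Nonempty) :
    ∃ j ∈ S, (1 - 1 / (S.card * lambdaMin (subMat C S))) * R2 C b S ≤ R2 C b (S.erase j) := by
  have := hS.to_subtype
  have hA := subMat_posDef hC S
  set α := (subMat C S)⁻¹ *ᵥ fun i : S => b i
  obtain ⟨j, -, hjmin⟩ := Finset.exists_min_image Finset.univ (fun i : S => α i ^ 2)
    Finset.univ_nonempty
  refine ⟨j, j.2, ?_⟩
  have havg : S.card * α j ^ 2 ≤ α ⬝ᵥ α := by
    have := Finset.card_nsmul_le_sum Finset.univ (fun i : S => α i ^ 2) _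
      fun i _ => hjmin i (Finset.mem_univ i)
    simpa [dotProduct, sq] using this
  have hray : lambdaMin (subMat C S) * (α ⬝ᵥ α) ≤ R2 C b S := by
    have := lambdaMin_mul_dotProduct_self_le hA.1 α
    rw [hA.mulVec_inv_mulVec] at this
    exact this.trans_eq (dotProduct_comm _ _)
  have hdrop := R2_sub_le_R2_erase b hC j.2
  rw [hdiag, one_mul, Subtype.coe_eta] at hdrop
  have hlam := lambdaMin_pos hA
  have hk : (0 : ℝ) < S.card := by exact_mod_cast hS.card_pos
  have hαj : α j ^ 2 ≤ 1 / (S.card * lambdaMin (subMat C S)) * R2 C b S := by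
    rw [one_div_mul_eq_div, le_div_iff₀ (by positivity)]
    nlinarith
  linarith

section CardSets

variable {ι α : Type*} [Fintype ι]

theorem finite_setOf_card_eq (f : Finset ι → α) (k : ℕ) :
    {x | ∃ S : Finset ι, S.card = k ∧ x = f S}.Finite :=
  (Set.finite_range f).subset fun _ ⟨S, _, hx⟩ => ⟨S, hx.symm⟩

theorem nonempty_setOf_card_eq (f : Finset ι → α) {k : ℕ} (hk : k ≤ Fintype.card ι) :
    {x | ∃ S : Finset ι, S.card = k ∧ x = f S}.Nonempty :=
  let ⟨S, _, hS⟩ := Finset.exists_subset_card_eq (s := Finset.univ) hk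
  ⟨f S, S, hS, rfl⟩

variable [ConditionallyCompleteLinearOrder α] (f : Finset ι → α) {k : ℕ}

theorem exists_eq_sSup_setOf_card_eq (hk : k ≤ Fintype.card ι) :
    ∃ S : Finset ι, S.card = k ∧ f S = sSup {x | ∃ S : Finset ι, S.card = k ∧ x = f S} :=
  let ⟨S, hS, hx⟩ := (nonempty_setOf_card_eq f hk).csSup_mem (finite_setOf_card_eq f k)
  ⟨S, hS, hx.symm⟩

theorem exists_eq_sInf_setOf_card_eq (hk : k ≤ Fintype.card ι) :
    ∃ S : Finset ι, S.card = k ∧ f S = sInf {x | ∃ S : Finset ι, S.card = k ∧ x = f S} :=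
  let ⟨S, hS, hx⟩ := (nonempty_setOf_card_eq f hk).csInf_mem (finite_setOf_card_eq f k)
  ⟨S, hS, hx.symm⟩

end CardSets

theorem lambdaMinK_pos {n k : ℕ} {C : Matrix (Fin n) (Fin n) ℝ} (hC : C.PosDef) (hk1 : 1 ≤ k)
    (hkn : k ≤ n) : 0 < lambdaMinK C k := by
  obtain ⟨S, hS, hmin⟩ :=
    exists_eq_sInf_setOf_card_eq (fun S => lambdaMin (subMat C S)) (by simpa using hkn)
  have := (Finset.card_pos.mp (hS ▸ hk1)).to_subtype
  rw [lambdaMinK, ← hmin]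
  exact lambdaMin_pos (subMat_posDef hC S)

/-- The best `R²` over subsets of size `k − 1` is at least
`(1 − 1/(k · λmin(C,k)))` times the best `R²` over subsets of size `k`. -/
theorem opt_R2_card_pred_bound {n k : ℕ}
    (C : Matrix (Fin n) (Fin n) ℝ) (b : Fin n → ℝ) (hC : C.PosDef)
    (hdiag : ∀ i, C i i = 1) (hk1 : 1 ≤ k) (hkn : k ≤ n) :
    (1 - 1 / (k * lambdaMinK C k)) *
        sSup {x | ∃ S : Finset (Fin n), S.card = k ∧ x = R2 C b S} ≤
      sSup {x | ∃ S : Finset (Fin n), S.card = k - 1 ∧ x = R2 C b S} := by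
  obtain ⟨S, hS, hmax⟩ := exists_eq_sSup_setOf_card_eq (R2 C b) (by simpa using hkn)
  obtain ⟨j, hj, hdrop⟩ :=
    exists_mem_one_sub_mul_R2_le_R2_erase b hC hdiag (Finset.card_pos.mp (by omega : 0 < S.card))
  have hL := lambdaMinK_pos hC hk1 hkn
  have hLS : lambdaMinK C k ≤ lambdaMin (subMat C S) :=
    csInf_le (finite_setOf_card_eq _ k).bddBelow ⟨S, hS, rfl⟩
  rw [← hmax]
  calc (1 - 1 / (k * lambdaMinK C k)) * R2 C b S
      ≤ (1 - 1 / (S.card * lambdaMin (subMat C S))) * R2 C b S := by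
        have := R2_nonneg b hC S
        rw [hS]
        gcongr
    _ ≤ R2 C b (S.erase j) := hdrop
    _ ≤ _ := le_csSup (finite_setOf_card_eq _ _).bddAbove
        ⟨_, by rw [Finset.card_erase_of_mem hj, hS], rfl⟩
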